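/- The Robinson form R(x,y,z) = x⁶ + y⁶ + z⁶ − (x⁴y² + x²y⁴ + x⁴z² + x²z⁴ + y⁴z² + y²z⁴) + 3x²y²z² is positive semidefinite but is not a sum of squares of polynomials. -/

import Mathlib

open MvPolynomial

/-- A real polynomial is a sum of squares (sos) if it equals a finite sum of squares
of real polynomials. -/
def IsSos {n : ℕ} (p : MvPolynomial (Fin n) ℝ) : Prop :=
  ∃ (k : ℕ) (g : Fin k → MvPolynomial (Fin n) ℝ), p = ∑ i, g i ^ 2

/-- A real polynomial is positive semidefinite (psd) if it takes nonnegative values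
at every real point. -/
def Psd {n : ℕ} (p : MvPolynomial (Fin n) ℝ) : Prop :=
  ∀ x : Fin n → ℝ, 0 ≤ eval x p

/-- The Robinson form R(x,y,z) = x⁶+y⁶+z⁶ − (x⁴y²+x²y⁴+x⁴z²+x²z⁴+y⁴z²+y²z⁴) + 3x²y²z². -/
noncomputable def Robinson : MvPolynomial (Fin 3) ℝ :=
  X 0 ^ 6 + X 1 ^ 6 + X 2 ^ 6
    - (X 0 ^ 4 * X 1 ^ 2 + X 0 ^ 2 * X 1 ^ 4 + X 0 ^ 4 * X 2 ^ 2 + X 0 ^ 2 * X 2 ^ 4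
        + X 1 ^ 4 * X 2 ^ 2 + X 1 ^ 2 * X 2 ^ 4)
    + 3 * (X 0 ^ 2 * X 1 ^ 2 * X 2 ^ 2)

/-! ### Auxiliary machinery -/

/-- Restriction of a polynomial in three variables to the line `t ↦ t • Q`. -/
noncomputable def lineMap (Q : Fin 3 → ℝ) : MvPolynomial (Fin 3) ℝ →ₐ[ℝ] Polynomial ℝ :=
  aeval (fun j => Polynomial.C (Q j) * Polynomial.X)

lemma coeff_lineMap (Q : Fin 3 → ℝ) (p : MvPolynomial (Fin 3) ℝ) (d : ℕ) :
    (lineMap Q p).coeff d = eval Q (homogeneousComponent d p) := by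
  induction p using MvPolynomial.induction_on' with
  | monomial m c =>
    have h3 : homogeneousComponent d (monomial m c) = if m.degree = d then monomial m c else 0 := by
      ext e
      simp only [coeff_homogeneousComponent, coeff_monomial, apply_ite (coeff e), coeff_zero]
      split_ifs with h1 h2 h3 <;> first | rfl | (exfalso; subst_vars; simp_all)
    have h2 : (m.prod fun i k => (Polynomial.C (Q i) * Polynomial.X)^k)
        = Polynomial.C (m.prod fun i k => Q i ^ k) * Polynomial.X ^ (m.degree) := by
      rw [Finsupp.prod, Finsupp.prod, Finsupp.degree_apply]
      simp only [mul_pow, ← Polynomial.C_pow]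
      rw [Finset.prod_mul_distrib, map_prod, Finset.prod_pow_eq_pow_sum]
    rw [lineMap, aeval_monomial, h2, h3]
    by_cases h : m.degree = d
    · rw [if_pos h, eval_monomial, ← h, ← mul_assoc, Polynomial.algebraMap_eq,
        ← Polynomial.C_mul, Polynomial.coeff_C_mul, Polynomial.coeff_X_pow, if_pos rfl, mul_one]
    · rw [if_neg h, ← mul_assoc, Polynomial.algebraMap_eq, ← Polynomial.C_mul,
        Polynomial.coeff_C_mul, Polynomial.coeff_X_pow, if_neg (fun hh => h hh.symm)]
      simp
  | add p q hp hq => simp [map_add, hp, hq]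

lemma lineMap_robinson (Q : Fin 3 → ℝ) :
    lineMap Q Robinson = Polynomial.C (eval Q Robinson) * Polynomial.X ^ 6 := by
  simp only [Robinson, lineMap, map_add, map_sub, map_mul, map_pow, aeval_X, eval_X, eval_add,
    eval_sub, eval_mul, eval_pow, map_ofNat, eval_ofNat]
  ring

lemma sq_coeff_two_mul {f : Polynomial ℝ} {m : ℕ} (h : f.natDegree ≤ m) :
    (f ^ 2).coeff (2 * m) = (f.coeff m) ^ 2 := by
  rcases eq_or_lt_of_le h with h | h
  · rw [sq, sq, ← h, two_mul, Polynomial.coeff_mul_degree_add_degree]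
    rfl
  · rw [Polynomial.coeff_eq_zero_of_natDegree_lt, Polynomial.coeff_eq_zero_of_natDegree_lt h,
      zero_pow two_ne_zero]
    calc (f^2).natDegree ≤ 2 * f.natDegree := Polynomial.natDegree_pow_le
    _ < 2 * m := by omega

/-- Any polynomial appearing in a sum-of-squares representation of the Robinson form
has total degree at most `3`. -/
lemma deg_le {k : ℕ} {g : Fin k → MvPolynomial (Fin 3) ℝ} (hg : Robinson = ∑ i, g i ^ 2)
    (i : Fin k) : (g i).totalDegree ≤ 3 := by
  set m := Finset.univ.sup (fun i => (g i).totalDegree) with hm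
  have hmle : ∀ j, (g j).totalDegree ≤ m := fun j =>
    Finset.le_sup (f := fun i => (g i).totalDegree) (Finset.mem_univ j)
  suffices hs : m ≤ 3 from le_trans (hmle i) hs
  by_contra hcon
  push_neg at hcon
  have hnd : ∀ (Q : Fin 3 → ℝ) j, (lineMap Q (g j)).natDegree ≤ m := by
    intro Q j
    apply Polynomial.natDegree_le_iff_coeff_eq_zero.2
    intro d hd
    rw [coeff_lineMap, homogeneousComponent_eq_zero _ _ (lt_of_le_of_lt (hmle j) hd), map_zero]
  have hzero : ∀ j, homogeneousComponent m (g j) = 0 := by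
    intro j
    have : ∀ Q : Fin 3 → ℝ, eval Q (homogeneousComponent m (g j)) = 0 := by
      intro Q
      have hsum : ∑ j', ((lineMap Q (g j')) ^ 2).coeff (2 * m) = 0 := by
        have h1 : (∑ j', (lineMap Q (g j')) ^ 2) = lineMap Q Robinson := by
          rw [hg]; simp [map_sum]
        have h2 := congrArg (fun f => Polynomial.coeff f (2 * m)) h1
        simp only [Polynomial.finset_sum_coeff] at h2
        rw [h2, lineMap_robinson, Polynomial.coeff_C_mul, Polynomial.coeff_X_pow,
          if_neg (by omega), mul_zero]
      have hsum2 : ∑ j', ((lineMap Q (g j')).coeff m) ^ 2 = 0 := by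
        rw [← hsum]
        exact Finset.sum_congr rfl fun j' _ => (sq_coeff_two_mul (hnd Q j')).symm
      have := (Finset.sum_eq_zero_iff_of_nonneg (fun j' _ => sq_nonneg _)).1 hsum2 j
        (Finset.mem_univ j)
      rw [← coeff_lineMap Q (g j) m]
      exact pow_eq_zero_iff two_ne_zero |>.1 this
    exact MvPolynomial.funext (p := homogeneousComponent m (g j))
      (q := (0 : MvPolynomial (Fin 3) ℝ)) (fun x => by simp [this x])
  have hne : (Finset.univ : Finset (Fin k)).Nonempty := by
    by_contra hk
    rw [Finset.not_nonempty_iff_eq_empty] at hk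
    rw [hm, hk] at hcon
    simp at hcon
  obtain ⟨i0, -, hi0⟩ := Finset.exists_mem_eq_sup _ hne (fun i => (g i).totalDegree)
  have hgne : g i0 ≠ 0 := by
    intro h0
    rw [h0] at hi0
    simp [← hm] at hi0
    omega
  obtain ⟨e, hes, hedeg⟩ := Finset.exists_mem_eq_sup (g i0).support
    (MvPolynomial.support_nonempty.2 hgne) (fun s => s.sum fun _ n => n)
  have hdeg : e.degree = m := by
    have h1 : (g i0).totalDegree = e.sum fun _ n => n := hedeg
    have h2 : (e.sum fun _ n => n) = ∑ i ∈ e.support, e i := rfl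
    rw [Finsupp.degree_apply, ← h2, ← h1, ← hi0]
  have h1 : coeff e (homogeneousComponent m (g i0)) = coeff e (g i0) := by
    rw [coeff_homogeneousComponent, if_pos hdeg]
  rw [hzero i0, coeff_zero] at h1
  exact (MvPolynomial.mem_support_iff.1 hes) h1.symm

/-- The exponent `(a, b, c)` as a finitely supported function on `Fin 3`. -/
noncomputable def E (a b c : ℕ) : Fin 3 →₀ ℕ :=
  Finsupp.single 0 a + Finsupp.single 1 b + Finsupp.single 2 c

lemma m_eq (m : Fin 3 →₀ ℕ) : m = E (m 0) (m 1) (m 2) := by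
  ext i
  fin_cases i <;> simp [E, Finsupp.single_apply]

lemma E_inj {a b c a' b' c' : ℕ} : E a b c = E a' b' c' ↔ a = a' ∧ b = b' ∧ c = c' := by
  constructor
  · intro h
    refine ⟨?_, ?_, ?_⟩
    · have := DFunLike.congr_fun h (0 : Fin 3)
      simpa [E, Finsupp.single_apply] using this
    · have := DFunLike.congr_fun h (1 : Fin 3)
      simpa [E, Finsupp.single_apply] using this
    · have := DFunLike.congr_fun h (2 : Fin 3)
      simpa [E, Finsupp.single_apply] using this
  · rintro ⟨rfl, rfl, rfl⟩; rfl

lemma E_degree (m : Fin 3 →₀ ℕ) : (m.sum fun _ n => n) = m 0 + m 1 + m 2 := by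
  rw [Finsupp.sum_fintype _ _ (fun _ => rfl), Fin.sum_univ_three]

lemma eval_E (v : Fin 3 → ℝ) (a b c : ℕ) (d : ℝ) :
    eval v (monomial (E a b c) d) = d * v 0 ^ a * v 1 ^ b * v 2 ^ c := by
  rw [eval_monomial, E]
  rw [Finsupp.prod_add_index' (fun _ => pow_zero _) (fun _ _ _ => pow_add _ _ _),
      Finsupp.prod_add_index' (fun _ => pow_zero _) (fun _ _ _ => pow_add _ _ _)]
  rw [Finsupp.prod_single_index, Finsupp.prod_single_index, Finsupp.prod_single_index] <;>
    first | ring | exact pow_zero _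

/-- Explicit representation of a polynomial of total degree at most 3 in terms of its
20 possible coefficients. -/
lemma repr3 (p : MvPolynomial (Fin 3) ℝ) (hp : p.totalDegree ≤ 3) :
    p = monomial (E 0 0 0) (coeff (E 0 0 0) p) +
      monomial (E 0 0 1) (coeff (E 0 0 1) p) +
      monomial (E 0 0 2) (coeff (E 0 0 2) p) +
      monomial (E 0 0 3) (coeff (E 0 0 3) p) +
      monomial (E 0 1 0) (coeff (E 0 1 0) p) +
      monomial (E 0 1 1) (coeff (E 0 1 1) p) +
      monomial (E 0 1 2) (coeff (E 0 1 2) p) +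
      monomial (E 0 2 0) (coeff (E 0 2 0) p) +
      monomial (E 0 2 1) (coeff (E 0 2 1) p) +
      monomial (E 0 3 0) (coeff (E 0 3 0) p) +
      monomial (E 1 0 0) (coeff (E 1 0 0) p) +
      monomial (E 1 0 1) (coeff (E 1 0 1) p) +
      monomial (E 1 0 2) (coeff (E 1 0 2) p) +
      monomial (E 1 1 0) (coeff (E 1 1 0) p) +
      monomial (E 1 1 1) (coeff (E 1 1 1) p) +
      monomial (E 1 2 0) (coeff (E 1 2 0) p) +
      monomial (E 2 0 0) (coeff (E 2 0 0) p) +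
      monomial (E 2 0 1) (coeff (E 2 0 1) p) +
      monomial (E 2 1 0) (coeff (E 2 1 0) p) +
      monomial (E 3 0 0) (coeff (E 3 0 0) p) := by
  ext m
  have hm3 : m ∈ p.support → m 0 + m 1 + m 2 ≤ 3 := fun h => by
    have := MvPolynomial.le_totalDegree h
    rw [E_degree] at this
    omega
  by_cases h : m 0 + m 1 + m 2 ≤ 3
  · obtain ⟨a, b, c, h3, rfl⟩ : ∃ a b c, a + b + c ≤ 3 ∧ m = E a b c :=
      ⟨m 0, m 1, m 2, h, m_eq m⟩
    have ha : a ≤ 3 := by omega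
    have hb : b ≤ 3 := by omega
    have hc : c ≤ 3 := by omega
    simp only [coeff_add, coeff_monomial, E_inj]
    interval_cases a <;> interval_cases b <;> interval_cases c <;> first | omega | norm_num
  · have hL : coeff m p = 0 := by
      by_contra hcoeff
      exact h (hm3 (MvPolynomial.mem_support_iff.2 hcoeff))
    rw [hL]
    symm
    simp only [coeff_add, coeff_monomial]
    rw [if_neg (fun hh => h (by obtain ⟨h1,h2,h3⟩ := E_inj.1 (hh.trans (m_eq m)); omega))]
    rw [if_neg (fun hh => h (by obtain ⟨h1,h2,h3⟩ := E_inj.1 (hh.trans (m_eq m)); omega))]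
    rw [if_neg (fun hh => h (by obtain ⟨h1,h2,h3⟩ := E_inj.1 (hh.trans (m_eq m)); omega))]
    rw [if_neg (fun hh => h (by obtain ⟨h1,h2,h3⟩ := E_inj.1 (hh.trans (m_eq m)); omega))]
    rw [if_neg (fun hh => h (by obtain ⟨h1,h2,h3⟩ := E_inj.1 (hh.trans (m_eq m)); omega))]
    rw [if_neg (fun hh => h (by obtain ⟨h1,h2,h3⟩ := E_inj.1 (hh.trans (m_eq m)); omega))]
    rw [if_neg (fun hh => h (by obtain ⟨h1,h2,h3⟩ := E_inj.1 (hh.trans (m_eq m)); omega))]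
    rw [if_neg (fun hh => h (by obtain ⟨h1,h2,h3⟩ := E_inj.1 (hh.trans (m_eq m)); omega))]
    rw [if_neg (fun hh => h (by obtain ⟨h1,h2,h3⟩ := E_inj.1 (hh.trans (m_eq m)); omega))]
    rw [if_neg (fun hh => h (by obtain ⟨h1,h2,h3⟩ := E_inj.1 (hh.trans (m_eq m)); omega))]
    rw [if_neg (fun hh => h (by obtain ⟨h1,h2,h3⟩ := E_inj.1 (hh.trans (m_eq m)); omega))]
    rw [if_neg (fun hh => h (by obtain ⟨h1,h2,h3⟩ := E_inj.1 (hh.trans (m_eq m)); omega))]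
    rw [if_neg (fun hh => h (by obtain ⟨h1,h2,h3⟩ := E_inj.1 (hh.trans (m_eq m)); omega))]
    rw [if_neg (fun hh => h (by obtain ⟨h1,h2,h3⟩ := E_inj.1 (hh.trans (m_eq m)); omega))]
    rw [if_neg (fun hh => h (by obtain ⟨h1,h2,h3⟩ := E_inj.1 (hh.trans (m_eq m)); omega))]
    rw [if_neg (fun hh => h (by obtain ⟨h1,h2,h3⟩ := E_inj.1 (hh.trans (m_eq m)); omega))]
    rw [if_neg (fun hh => h (by obtain ⟨h1,h2,h3⟩ := E_inj.1 (hh.trans (m_eq m)); omega))]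
    rw [if_neg (fun hh => h (by obtain ⟨h1,h2,h3⟩ := E_inj.1 (hh.trans (m_eq m)); omega))]
    rw [if_neg (fun hh => h (by obtain ⟨h1,h2,h3⟩ := E_inj.1 (hh.trans (m_eq m)); omega))]
    rw [if_neg (fun hh => h (by obtain ⟨h1,h2,h3⟩ := E_inj.1 (hh.trans (m_eq m)); omega))]
    norm_num

set_option maxRecDepth 10000 in
/-- A polynomial of degree at most 3 vanishing at the 19 chosen points of the zero
set of the Robinson form also vanishes at `(1,0,0)`. -/
lemma key (p : MvPolynomial (Fin 3) ℝ) (hp : p.totalDegree ≤ 3)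
    (h1 : eval ![(1:ℝ), 1, 0] p = 0)
    (h2 : eval ![(2:ℝ), 2, 0] p = 0)
    (h3 : eval ![(3:ℝ), 3, 0] p = 0)
    (h4 : eval ![(4:ℝ), 4, 0] p = 0)
    (h5 : eval ![(1:ℝ), -1, 0] p = 0)
    (h6 : eval ![(2:ℝ), -2, 0] p = 0)
    (h7 : eval ![(3:ℝ), -3, 0] p = 0)
    (h8 : eval ![(1:ℝ), 0, 1] p = 0)
    (h9 : eval ![(2:ℝ), 0, 2] p = 0)
    (h10 : eval ![(1:ℝ), 0, -1] p = 0)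
    (h11 : eval ![(2:ℝ), 0, -2] p = 0)
    (h12 : eval ![(0:ℝ), 1, 1] p = 0)
    (h13 : eval ![(0:ℝ), 2, 2] p = 0)
    (h14 : eval ![(0:ℝ), 1, -1] p = 0)
    (h15 : eval ![(0:ℝ), 2, -2] p = 0)
    (h16 : eval ![(1:ℝ), 1, 1] p = 0)
    (h17 : eval ![(1:ℝ), 1, -1] p = 0)
    (h18 : eval ![(1:ℝ), -1, 1] p = 0)
    (h19 : eval ![(-1:ℝ), 1, 1] p = 0) :
    eval ![(1:ℝ), 0, 0] p = 0 := by
  rw [repr3 p hp] at h1 h2 h3 h4 h5 h6 h7 h8 h9 h10 h11 h12 h13 h14 h15 h16 h17 h18 h19 ⊢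
  simp only [map_add, eval_E] at h1 h2 h3 h4 h5 h6 h7 h8 h9 h10 h11 h12 h13 h14 h15 h16 h17 h18 h19 ⊢
  norm_num [Matrix.cons_val_two, Matrix.tail_cons, Matrix.head_cons] at h1 h2 h3 h4 h5 h6 h7 h8 h9 h10 h11 h12 h13 h14 h15 h16 h17 h18 h19 ⊢
  linear_combination (-15/16) * h1 + (49/16) * h2 + (-35/16) * h3 + (9/16) * h4 + (23/16) * h5 + (-3/4) * h6 + (3/16) * h7 + (3/4) * h8 + (-1/32) * h9 + (-1/4) * h10 + (3/32) * h11 + (-3/4) * h12 + (3/32) * h13 + (1/4) * h14 + (-1/32) * h15 + (-1/4) * h16 + (-1/4) * h17 + (-1/4) * h18 + (1/4) * h19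

/-- The Robinson form is psd but not sos. -/
theorem robinson_psd_not_sos : Psd Robinson ∧ ¬ IsSos Robinson := by
  constructor
  · -- positivity: Schur's inequality applied to x², y², z²
    intro x
    simp only [Robinson, eval_add, eval_sub, eval_mul, eval_pow, eval_X, eval_ofNat]
    nlinarith [sq_nonneg (x 0 ^ 2 - x 1 ^ 2), sq_nonneg (x 1 ^ 2 - x 2 ^ 2),
      sq_nonneg (x 0 ^ 2 - x 2 ^ 2), sq_nonneg (x 0), sq_nonneg (x 1), sq_nonneg (x 2),
      sq_nonneg (x 0 * x 1), sq_nonneg (x 1 * x 2), sq_nonneg (x 0 * x 2),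
      sq_nonneg (x 0 * (x 0 ^ 2 - x 1 ^ 2)), sq_nonneg (x 0 * (x 0 ^ 2 - x 2 ^ 2)),
      sq_nonneg (x 1 * (x 1 ^ 2 - x 2 ^ 2)), sq_nonneg (x 1 * (x 1 ^ 2 - x 0 ^ 2)),
      sq_nonneg (x 2 * (x 2 ^ 2 - x 0 ^ 2)), sq_nonneg (x 2 * (x 2 ^ 2 - x 1 ^ 2)),
      mul_nonneg (mul_nonneg (sq_nonneg (x 0)) (sq_nonneg (x 1))) (sq_nonneg (x 2))]
  · rintro ⟨k, g, hg⟩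
    have hsq : ∀ v : Fin 3 → ℝ, eval v Robinson = 0 → ∀ i, eval v (g i) = 0 := by
      intro v hv i
      have h0 : ∑ j, (eval v (g j)) ^ 2 = 0 := by
        rw [← hv, hg]
        simp [map_sum]
      have := (Finset.sum_eq_zero_iff_of_nonneg (fun j _ => sq_nonneg _)).1 h0 i
        (Finset.mem_univ i)
      exact pow_eq_zero_iff two_ne_zero |>.1 this
    have ez1 : eval ![(1:ℝ), 1, 0] Robinson = 0 := by simp [Robinson] <;> norm_num
    have ez2 : eval ![(2:ℝ), 2, 0] Robinson = 0 := by simp [Robinson] <;> norm_num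
    have ez3 : eval ![(3:ℝ), 3, 0] Robinson = 0 := by simp [Robinson] <;> norm_num
    have ez4 : eval ![(4:ℝ), 4, 0] Robinson = 0 := by simp [Robinson] <;> norm_num
    have ez5 : eval ![(1:ℝ), -1, 0] Robinson = 0 := by simp [Robinson] <;> norm_num
    have ez6 : eval ![(2:ℝ), -2, 0] Robinson = 0 := by simp [Robinson] <;> norm_num
    have ez7 : eval ![(3:ℝ), -3, 0] Robinson = 0 := by simp [Robinson] <;> norm_num
    have ez8 : eval ![(1:ℝ), 0, 1] Robinson = 0 := by simp [Robinson] <;> norm_num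
    have ez9 : eval ![(2:ℝ), 0, 2] Robinson = 0 := by simp [Robinson] <;> norm_num
    have ez10 : eval ![(1:ℝ), 0, -1] Robinson = 0 := by simp [Robinson] <;> norm_num
    have ez11 : eval ![(2:ℝ), 0, -2] Robinson = 0 := by simp [Robinson] <;> norm_num
    have ez12 : eval ![(0:ℝ), 1, 1] Robinson = 0 := by simp [Robinson] <;> norm_num
    have ez13 : eval ![(0:ℝ), 2, 2] Robinson = 0 := by simp [Robinson] <;> norm_num
    have ez14 : eval ![(0:ℝ), 1, -1] Robinson = 0 := by simp [Robinson] <;> norm_num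
    have ez15 : eval ![(0:ℝ), 2, -2] Robinson = 0 := by simp [Robinson] <;> norm_num
    have ez16 : eval ![(1:ℝ), 1, 1] Robinson = 0 := by simp [Robinson] <;> norm_num
    have ez17 : eval ![(1:ℝ), 1, -1] Robinson = 0 := by simp [Robinson] <;> norm_num
    have ez18 : eval ![(1:ℝ), -1, 1] Robinson = 0 := by simp [Robinson] <;> norm_num
    have ez19 : eval ![(-1:ℝ), 1, 1] Robinson = 0 := by simp [Robinson] <;> norm_num
    have hz : ∀ i, eval ![(1:ℝ), 0, 0] (g i) = 0 := fun i =>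
      key (g i) (deg_le hg i) (hsq _ ez1 i) (hsq _ ez2 i) (hsq _ ez3 i) (hsq _ ez4 i) (hsq _ ez5 i) (hsq _ ez6 i) (hsq _ ez7 i) (hsq _ ez8 i) (hsq _ ez9 i) (hsq _ ez10 i) (hsq _ ez11 i) (hsq _ ez12 i) (hsq _ ez13 i) (hsq _ ez14 i) (hsq _ ez15 i) (hsq _ ez16 i) (hsq _ ez17 i) (hsq _ ez18 i) (hsq _ ez19 i)
    have hR0 : eval ![(1:ℝ), 0, 0] Robinson = 0 := by
      rw [hg]
      simp [map_sum, hz]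
    have hR1 : eval ![(1:ℝ), 0, 0] Robinson = 1 := by
      simp [Robinson]
    exact one_ne_zero (hR1 ▸ hR0)
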